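/- The diamond graph, consisting of two triangles sharing one edge (4 vertices v_1, v_2, v_3, v_4 with all edges present except v_1v_4, i.e., K_4 minus one edge), is not strongly EFX-orientable: there exists an assignment of additive graphical valuations to its vertices for which no EFX orientation exists. -/

import Mathlib

open SimpleGraph
open scoped Classical

variable {V : Type*}

def bundleSet (G : SimpleGraph V) (head : Sym2 V → V) (v : V) : Set (Sym2 V) :=
  {e ∈ G.edgeSet | head e = v}

def IsEFXOrientation (G : SimpleGraph V) (f : V → Set (Sym2 V) → NNReal)
    (head : Sym2 V → V) : Prop :=
  (∀ e ∈ G.edgeSet, head e ∈ e) ∧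
  ∀ a b : V, ∀ g ∈ bundleSet G head b,
    f a (bundleSet G head b \ {g}) ≤ f a (bundleSet G head a)

def StronglyEFXOrientable [Fintype V] (G : SimpleGraph V) : Prop :=
  ∀ f : V → Set (Sym2 V) → NNReal,
    (∀ a, Monotone (f a)) →
    (∀ a X, f a X = f a (X ∩ G.incidenceSet a)) →
    ∃ head : Sym2 V → V, IsEFXOrientation G f head

noncomputable def bundle [Fintype V] (G : SimpleGraph V) (head : Sym2 V → V) (v : V) :
    Finset (Sym2 V) :=
  Finset.univ.filter fun e => e ∈ G.edgeSet ∧ head e = v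

def IsEFX01Orientation [Fintype V] (G : SimpleGraph V) (w : V → Sym2 V → ℕ)
    (head : Sym2 V → V) : Prop :=
  (∀ e ∈ G.edgeSet, head e ∈ e) ∧
  ∀ a b : V, ∀ g ∈ bundle G head b,
    ∑ e ∈ (bundle G head b).erase g, w a e ≤ ∑ e ∈ bundle G head a, w a e

def ZeroOneStronglyEFXOrientable [Fintype V] (G : SimpleGraph V) : Prop :=
  ∀ w : V → Sym2 V → ℕ, (∀ a e, w a e ≤ 1) → (∀ a e, a ∉ e → w a e = 0) →
    ∃ head : Sym2 V → V, IsEFX01Orientation G w head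

def IndepOn (G : SimpleGraph V) (s : Set V) : Prop :=
  ∀ a ∈ s, ∀ b ∈ s, ¬ G.Adj a b

/-- The diamond graph: `K₄` on the vertices `v₀,v₁,v₂,v₃` minus the edge `v₀v₃`,
i.e. two triangles `v₀v₁v₂` and `v₁v₂v₃` sharing the edge `v₁v₂`. -/
def diamond : SimpleGraph (Fin 4) :=
  SimpleGraph.fromEdgeSet {s(0, 1), s(0, 2), s(1, 2), s(1, 3), s(2, 3)}

/-!
Weights: `v₀` and `v₂` value the edge `v₀v₂` at `1` and `2`, `v₁` and `v₂` value `v₁v₂` at `1`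
and `1`, `v₁` and `v₃` value `v₁v₃` at `2` and `1`, and nobody values `v₀v₁` or `v₂v₃`. For
additive valuations, EFX forbids any vertex `a` to value the bundle of the head of an edge `g`
more than its own bundle plus `w a g`. If `v₀v₂` points to `v₂`, then `v₀` owns nothing it
values, so the bundle of `v₂` must be just `{v₀v₂}`, and whichever way `v₁v₃` points, `v₁` or
`v₃` envies. If it points to `v₀`, then `v₂` envies unless it takes `v₁v₂` and `v₀v₁` goes to
`v₁`; in that case `v₃` envies `v₁` if `v₁` takes `v₁v₃`, and otherwise `v₁` envies.
-/

section Additive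

variable [Fintype V]

lemma mem_bundle {G : SimpleGraph V} {head : Sym2 V → V} {v : V} {e : Sym2 V} :
    e ∈ bundle G head v ↔ e ∈ G.edgeSet ∧ head e = v := by
  simp [bundle]

noncomputable def additiveValuation (G : SimpleGraph V) (w : V → Sym2 V → NNReal) (a : V)
    (X : Set (Sym2 V)) : NNReal :=
  ∑ e with e ∈ X ∩ G.incidenceSet a, w a e

lemma additiveValuation_monotone (G : SimpleGraph V) (w : V → Sym2 V → NNReal) (a : V) :
    Monotone (additiveValuation G w a) := fun _ _ hXY =>
  Finset.sum_le_sum_of_subset (Finset.monotone_filter_right _ fun _ _ he => ⟨hXY he.1, he.2⟩)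

lemma additiveValuation_inter_incidenceSet (G : SimpleGraph V) (w : V → Sym2 V → NNReal)
    (a : V) (X : Set (Sym2 V)) :
    additiveValuation G w a X = additiveValuation G w a (X ∩ G.incidenceSet a) := by
  simp [additiveValuation, Set.inter_assoc]

lemma additiveValuation_bundleSet_sdiff {G : SimpleGraph V} {w : V → Sym2 V → NNReal}
    (hw : ∀ a e, a ∉ e → w a e = 0) (head : Sym2 V → V) (a v : V) (T : Set (Sym2 V)) :
    additiveValuation G w a (bundleSet G head v \ T) =
      ∑ e ∈ bundle G head v with e ∉ T, w a e := by
  rw [additiveValuation, bundle, Finset.filter_filter]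
  refine Finset.sum_subset (fun e he => ?_) (fun e he he' => ?_)
  · simp only [Finset.mem_filter, Finset.mem_univ, true_and] at he ⊢
    exact ⟨he.1.1, he.1.2⟩
  · simp only [Finset.mem_filter, Finset.mem_univ, true_and] at he he'
    exact hw a e fun hae => he' ⟨⟨he.1, he.2⟩, he.1.1, hae⟩

variable [DecidableEq V]

def IsAdditiveEFXOrientation (G : SimpleGraph V) (w : V → Sym2 V → NNReal)
    (head : Sym2 V → V) : Prop :=
  (∀ e ∈ G.edgeSet, head e ∈ e) ∧
  ∀ a b : V, ∀ g ∈ bundle G head b,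
    ∑ e ∈ (bundle G head b).erase g, w a e ≤ ∑ e ∈ bundle G head a, w a e

lemma sum_bundle_eq_sum_ite {G : SimpleGraph V} {head : Sym2 V → V} {v : V}
    {f : Sym2 V → NNReal} {S : Finset (Sym2 V)} (hS : ↑S ⊆ G.edgeSet) (hf : ∀ e ∉ S, f e = 0) :
    ∑ e ∈ bundle G head v, f e = ∑ e ∈ S, if head e = v then f e else 0 := by
  rw [← Finset.sum_filter]
  symm
  refine Finset.sum_subset (fun e he => ?_) (fun e he he' => ?_)
  · rw [Finset.mem_filter] at he
    exact mem_bundle.2 ⟨hS he.1, he.2⟩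
  · exact hf e fun heS => he' (Finset.mem_filter.2 ⟨heS, (mem_bundle.1 he).2⟩)

lemma IsAdditiveEFXOrientation.sum_bundle_head_le {G : SimpleGraph V}
    {w : V → Sym2 V → NNReal} {head : Sym2 V → V} (h : IsAdditiveEFXOrientation G w head)
    {g : Sym2 V} (hg : g ∈ G.edgeSet) (a : V) :
    ∑ e ∈ bundle G head (head g), w a e ≤ ∑ e ∈ bundle G head a, w a e + w a g := by
  have hg' : g ∈ bundle G head (head g) := mem_bundle.2 ⟨hg, rfl⟩
  rw [← Finset.sum_erase_add _ _ hg']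
  exact add_le_add_left (h.2 a _ g hg') _

lemma StronglyEFXOrientable.exists_isAdditiveEFXOrientation {G : SimpleGraph V}
    (hG : StronglyEFXOrientable G) (w : V → Sym2 V → NNReal) (hw : ∀ a e, a ∉ e → w a e = 0) :
    ∃ head, IsAdditiveEFXOrientation G w head := by
  obtain ⟨head, hhead, hefx⟩ := hG (additiveValuation G w) (additiveValuation_monotone G w)
    (additiveValuation_inter_incidenceSet G w)
  refine ⟨head, hhead, fun a b g hg => ?_⟩
  have h := hefx a b g (mem_bundle.1 hg)
  rw [additiveValuation_bundleSet_sdiff hw, ← Set.sdiff_empty (s := bundleSet G head a),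
    additiveValuation_bundleSet_sdiff hw] at h
  simpa [Finset.filter_ne', Finset.filter_true_of_mem] using h

end Additive

noncomputable def diamondWeight (a : Fin 4) (e : Sym2 (Fin 4)) : NNReal :=
  if e = s(0, 2) then ![1, 0, 2, 0] a
  else if e = s(1, 2) then ![0, 1, 1, 0] a
  else if e = s(1, 3) then ![0, 2, 0, 1] a
  else 0

lemma diamondWeight_eq_zero_of_notMem {a : Fin 4} {e : Sym2 (Fin 4)} (h : a ∉ e) :
    diamondWeight a e = 0 := by
  unfold diamondWeight
  split_ifs <;> subst_vars <;> fin_cases a <;> simp_all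

lemma sum_bundle_diamondWeight (head : Sym2 (Fin 4) → Fin 4) (a v : Fin 4) :
    ∑ e ∈ bundle diamond head v, diamondWeight a e =
      (if head s(0, 2) = v then diamondWeight a s(0, 2) else 0) +
      (if head s(1, 2) = v then diamondWeight a s(1, 2) else 0) +
      (if head s(1, 3) = v then diamondWeight a s(1, 3) else 0) := by
  rw [sum_bundle_eq_sum_ite (S := {s(0, 2), s(1, 2), s(1, 3)})]
  · rw [Finset.sum_insert (by decide), Finset.sum_insert (by decide), Finset.sum_singleton,
      add_assoc]
  · simp [Set.insert_subset_iff, diamond]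
  · intro e he
    simp_all [diamondWeight]

lemma diamond_not_isAdditiveEFXOrientation (head : Sym2 (Fin 4) → Fin 4) :
    ¬ IsAdditiveEFXOrientation diamond diamondWeight head := by
  intro h
  have head_mem (i j : Fin 4) (hij : diamond.Adj i j := by simp [diamond]) :
      head s(i, j) = i ∨ head s(i, j) = j :=
    Sym2.mem_iff.1 (h.1 _ hij)
  -- `envy a i j`: `a` envies the head of `ij` even after removing `ij`; both side conditions
  -- are decided on the spot from the current orientation of the three weighted edges.
  have envy (a i j : Fin 4) (hij : diamond.Adj i j := by simp [diamond])
      (hlt : ∑ e ∈ bundle diamond head a, diamondWeight a e + diamondWeight a s(i, j) <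
        ∑ e ∈ bundle diamond head (head s(i, j)), diamondWeight a e := by
          simp only [sum_bundle_diamondWeight]; simp [diamondWeight, *]) : False :=
    (h.sum_bundle_head_le hij a).not_gt hlt
  obtain h02 | h02 := head_mem 0 2
  · obtain h12 | h12 := head_mem 1 2
    · obtain h01 | h01 := head_mem 0 1 <;>
      exact envy 2 0 1
    · obtain h13 | h13 := head_mem 1 3
      · obtain h01 | h01 := head_mem 0 1
        · exact envy 2 0 1
        · exact envy 3 0 1
      · obtain h23 | h23 := head_mem 2 3 <;>
        exact envy 1 2 3
  · obtain h12 | h12 := head_mem 1 2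
    · obtain h23 | h23 := head_mem 2 3
      · exact envy 0 2 3
      · obtain h13 | h13 := head_mem 1 3
        · exact envy 3 1 2
        · exact envy 1 2 3
    · exact envy 0 1 2

/-- The diamond graph is not strongly EFX-orientable: there is an
assignment of additive graphical valuations (given by edge weights `w`, with the value of a
bundle being the sum of the weights of its edges) for which no EFX orientation exists. -/
theorem diamond_not_stronglyEFXOrientable :
    (∃ w : Fin 4 → Sym2 (Fin 4) → NNReal,
      (∀ a e, a ∉ e → w a e = 0) ∧
      ¬ ∃ head : Sym2 (Fin 4) → Fin 4,
          (∀ e ∈ diamond.edgeSet, head e ∈ e) ∧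
          ∀ a b : Fin 4, ∀ g ∈ bundle diamond head b,
            ∑ e ∈ (bundle diamond head b).erase g, w a e ≤
              ∑ e ∈ bundle diamond head a, w a e) ∧
    ¬ StronglyEFXOrientable diamond := by
  have hw : ∀ a e, a ∉ e → diamondWeight a e = 0 := fun _ _ => diamondWeight_eq_zero_of_notMem
  refine ⟨⟨diamondWeight, hw, fun ⟨head, h⟩ => diamond_not_isAdditiveEFXOrientation head h⟩,
    fun hG => ?_⟩
  obtain ⟨head, h⟩ := hG.exists_isAdditiveEFXOrientation diamondWeight hw
  exact diamond_not_isAdditiveEFXOrientation head h
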